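/- arXiv:2309.08468 — 2 statements merged into one kernel-verified Lean document; each statement's English description precedes it below -/
import Mathlib

section
/- Proposition 1 (overlap-penalized optimality of the true parameters): Let P₀ be the distribution with density f₀(x) = η(θ⁰,π⁰) Σ_{j=1}^{k₀} 1_{Z_j(θ⁰,π⁰)}(x) π_j⁰ φ(x;θ_j⁰). Then for any number of clusters k, any Gaussian parameters θ = {θ_j}_{j=1}^k, and any weights π ∈ [0,1]^k summing to 1, we have P₀[Σ_{j=1}^{k₀} 1_{Z_j(θ⁰,π⁰)}(·) log(π_j⁰ φ(·;θ_j⁰))] − P₀[Σ_{j=1}^{k} 1_{Z_j(θ,π)}(·) log(π_j φ(·;θ_j))] ≥ log(η(θ,π)/η(θ⁰,π⁰)). -/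
open MeasureTheory Matrix

/-- The `p`-variate Gaussian density with mean `m` and covariance matrix `S`. -/
noncomputable def gpdf {p : ℕ} (m : Fin p → ℝ) (S : Matrix (Fin p) (Fin p) ℝ)
    (x : Fin p → ℝ) : ℝ :=
  (2 * Real.pi) ^ (-(p : ℝ) / 2) * S.det ^ (-(1 : ℝ) / 2) *
    Real.exp (-(1 / 2) * ((x - m) ⬝ᵥ (S⁻¹ *ᵥ (x - m))))

/-- The weighted maximum-likelihood assignment region `Z_j(θ,π)`, with ties assigned to the
smallest index, so that the `Z_j` partition `ℝᵖ`. -/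
noncomputable def Zpart {p k : ℕ} (w : Fin k → ℝ) (m : Fin k → Fin p → ℝ)
    (S : Fin k → Matrix (Fin p) (Fin p) ℝ) (j : Fin k) : Set (Fin p → ℝ) :=
  {x | (∀ r, w r * gpdf (m r) (S r) x ≤ w j * gpdf (m j) (S j) x) ∧
    ∀ r < j, ¬ ∀ s, w s * gpdf (m s) (S s) x ≤ w r * gpdf (m r) (S r) x}

/-- The denominator `∑ⱼ πⱼ ∫_{Z_j(θ,π)} φ(x;θⱼ) dx` of the normalizing constant. -/
noncomputable def etaDen {p k : ℕ} (w : Fin k → ℝ) (m : Fin k → Fin p → ℝ)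
    (S : Fin k → Matrix (Fin p) (Fin p) ℝ) : ℝ :=
  ∑ j, w j * ∫ x in Zpart w m S j, gpdf (m j) (S j) x

/-- The normalizing constant `η(θ,π)`. -/
noncomputable def eta {p k : ℕ} (w : Fin k → ℝ) (m : Fin k → Fin p → ℝ)
    (S : Fin k → Matrix (Fin p) (Fin p) ℝ) : ℝ :=
  1 / etaDen w m S

/-- The truncated-Gaussian clustering density
`f₀(x) = η(θ,π) ∑ⱼ 1_{Z_j(θ,π)}(x) πⱼ φ(x;θⱼ)`. -/
noncomputable def clusterDensity {p k : ℕ} (w : Fin k → ℝ) (m : Fin k → Fin p → ℝ)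
    (S : Fin k → Matrix (Fin p) (Fin p) ℝ) (x : Fin p → ℝ) : ℝ :=
  eta w m S * ∑ j, Set.indicator (Zpart w m S j) (fun y => w j * gpdf (m j) (S j) y) x

/-! Gibbs' inequality `∫ f₀ log f ≤ ∫ f₀ log f₀` for the truncated-Gaussian densities
`f₀ = η(θ⁰,π⁰) g₀` and `f = η(θ,π) g`, where `g = ∑ⱼ 1_{Z_j} πⱼ φ(·;θⱼ)`, reads
`log η(θ,π) + ∫ f₀ log g ≤ log η(θ⁰,π⁰) + ∫ f₀ log g₀`. Since the `Z_j` partition `ℝᵖ` and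
`g = πⱼ φ(·;θⱼ)` on `Z_j`, the two integrals are the classification log-likelihoods under `P₀`.
Everything is integrable because `|log g|` grows at most quadratically while `f₀` has Gaussian
tails. -/

open Real

section Homogeneous

variable {E : Type*} [NormedAddCommGroup E] [NormedSpace ℝ E] {q : E → ℝ}

lemma eq_sq_norm_mul_of_homogeneous (hq : ∀ (c : ℝ) y, q (c • y) = c ^ 2 * q y) (y : E) :
    q y = ‖y‖ ^ 2 * q (‖y‖⁻¹ • y) := by
  rcases eq_or_ne y 0 with rfl | hy
  · simpa using hq 0 0
  · rw [hq, ← mul_assoc, ← mul_pow, mul_inv_cancel₀ (norm_ne_zero_iff.2 hy), one_pow, one_mul]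

variable [FiniteDimensional ℝ E]

lemma exists_abs_le_mul_sq_norm_of_homogeneous (hcont : Continuous q)
    (hq : ∀ (c : ℝ) y, q (c • y) = c ^ 2 * q y) : ∃ C ≥ 0, ∀ y, |q y| ≤ C * ‖y‖ ^ 2 := by
  obtain ⟨C, hC⟩ := (isCompact_sphere (0 : E) 1).exists_bound_of_continuousOn hcont.continuousOn
  refine ⟨max C 0, le_max_right _ _, fun y => ?_⟩
  rw [eq_sq_norm_mul_of_homogeneous hq y, abs_mul, abs_of_nonneg (by positivity), mul_comm]
  rcases eq_or_ne y 0 with rfl | hy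
  · simp
  · gcongr
    exact (hC _ (by simp [norm_smul, hy])).trans (le_max_left _ _)

lemma exists_pos_mul_sq_norm_le_of_homogeneous (hcont : Continuous q)
    (hq : ∀ (c : ℝ) y, q (c • y) = c ^ 2 * q y) (hpos : ∀ y ≠ 0, 0 < q y) :
    ∃ ε > 0, ∀ y, ε * ‖y‖ ^ 2 ≤ q y := by
  rcases subsingleton_or_nontrivial E with hE | hE
  · refine ⟨1, one_pos, fun y => ?_⟩
    rw [Subsingleton.elim y 0, eq_sq_norm_mul_of_homogeneous hq 0]
    simp
  obtain ⟨u, hu, hmin⟩ := (isCompact_sphere (0 : E) 1).exists_isMinOn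
    (NormedSpace.sphere_nonempty.2 zero_le_one) hcont.continuousOn
  refine ⟨q u, hpos u (by rintro rfl; simp at hu), fun y => ?_⟩
  rw [eq_sq_norm_mul_of_homogeneous hq y, mul_comm]
  rcases eq_or_ne y 0 with rfl | hy
  · simp
  · gcongr
    exact hmin (by simp [norm_smul, hy])

end Homogeneous

lemma sq_norm_add_le {E : Type*} [SeminormedAddCommGroup E] (a b : E) :
    ‖a + b‖ ^ 2 ≤ 2 * (‖a‖ ^ 2 + ‖b‖ ^ 2) :=
  (pow_le_pow_left₀ (norm_nonneg _) (norm_add_le a b) 2).trans add_sq_le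

section QuadraticForm

variable {n : Type*} [Fintype n] (A : Matrix n n ℝ)

lemma smul_dotProduct_mulVec_smul (c : ℝ) (y : n → ℝ) :
    (c • y) ⬝ᵥ (A *ᵥ (c • y)) = c ^ 2 * (y ⬝ᵥ (A *ᵥ y)) := by
  rw [mulVec_smul, smul_dotProduct, dotProduct_smul, smul_eq_mul, smul_eq_mul]
  ring

lemma Matrix.exists_abs_dotProduct_mulVec_le :
    ∃ C ≥ 0, ∀ y : n → ℝ, |y ⬝ᵥ (A *ᵥ y)| ≤ C * ‖y‖ ^ 2 :=
  exists_abs_le_mul_sq_norm_of_homogeneous (by fun_prop) (smul_dotProduct_mulVec_smul A)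

variable {A} in
lemma Matrix.PosDef.exists_pos_mul_sq_norm_le (hA : A.PosDef) :
    ∃ ε > 0, ∀ y : n → ℝ, ε * ‖y‖ ^ 2 ≤ y ⬝ᵥ (A *ᵥ y) :=
  exists_pos_mul_sq_norm_le_of_homogeneous (by fun_prop) (smul_dotProduct_mulVec_smul A)
    fun y hy => by simpa using hA.dotProduct_mulVec_pos hy

end QuadraticForm

lemma one_add_le_mul_exp {c t : ℝ} (hc : 0 < c) (ht : 0 ≤ t) :
    1 + t ≤ (1 + 1 / c) * exp (c * t) := by
  have h1 : 1 ≤ exp (c * t) := one_le_exp (by positivity)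
  have h2 : c * t ≤ exp (c * t) := (le_add_of_nonneg_right zero_le_one).trans (add_one_le_exp _)
  have h3 : t ≤ exp (c * t) / c := by rw [le_div_iff₀ hc]; linarith
  calc 1 + t ≤ exp (c * t) + exp (c * t) / c := add_le_add h1 h3
    _ = (1 + 1 / c) * exp (c * t) := by ring

section GaussianTail

variable {ι : Type*} [Fintype ι]

lemma integrable_exp_neg_mul_sq_norm {c : ℝ} (hc : 0 < c) :
    Integrable (fun x : ι → ℝ => exp (-c * ‖x‖ ^ 2)) := by
  set N : ℝ := (Fintype.card ι : ℝ)
  have hprod : Integrable (fun x : ι → ℝ => ∏ i, exp (-(c / N) * x i ^ 2)) :=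
    Integrable.fintype_prod fun i => integrable_exp_neg_mul_sq <| by
      have : 0 < Fintype.card ι := Fintype.card_pos_iff.2 ⟨i⟩
      positivity
  refine hprod.mono (by fun_prop) (ae_of_all _ fun x => ?_)
  have hsum : ∑ i, x i ^ 2 ≤ N * ‖x‖ ^ 2 := by
    simpa using Finset.sum_le_card_nsmul Finset.univ (fun i => x i ^ 2) (‖x‖ ^ 2)
      fun i _ => by simpa using pow_le_pow_left₀ (abs_nonneg _) (norm_le_pi_norm x i) 2
  have hexp : c / N * ∑ i, x i ^ 2 ≤ c * ‖x‖ ^ 2 :=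
    calc c / N * ∑ i, x i ^ 2 ≤ c / N * (N * ‖x‖ ^ 2) := by gcongr
      _ = c * ‖x‖ ^ 2 * (N / N) := by ring
      _ ≤ c * ‖x‖ ^ 2 := mul_le_of_le_one_right (by positivity) (div_self_le_one N)
  rw [← exp_sum, norm_of_nonneg (exp_pos _).le, norm_of_nonneg (exp_pos _).le, exp_le_exp,
    ← Finset.mul_sum]
  linarith

lemma integrable_mul_one_add_sq_norm_of_le_exp {f : (ι → ℝ) → ℝ}
    (hf : AEStronglyMeasurable f) {c K : ℝ} (hc : 0 < c)
    (hfK : ∀ x, |f x| ≤ K * exp (-c * ‖x‖ ^ 2)) :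
    Integrable (fun x => f x * (1 + ‖x‖ ^ 2)) := by
  have hK : 0 ≤ K := nonneg_of_mul_nonneg_left ((abs_nonneg _).trans (hfK 0)) (exp_pos _)
  refine ((integrable_exp_neg_mul_sq_norm (half_pos hc)).const_mul (K * (1 + 1 / (c / 2)))).mono
    (by fun_prop) (ae_of_all _ fun x => ?_)
  have htail := one_add_le_mul_exp (half_pos hc) (sq_nonneg ‖x‖)
  rw [norm_mul, norm_of_nonneg (by positivity : (0 : ℝ) ≤ 1 + ‖x‖ ^ 2), Real.norm_eq_abs,
    norm_of_nonneg (by positivity)]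
  calc |f x| * (1 + ‖x‖ ^ 2)
      ≤ K * exp (-c * ‖x‖ ^ 2) * ((1 + 1 / (c / 2)) * exp (c / 2 * ‖x‖ ^ 2)) := by
        gcongr
        exact hfK x
    _ = K * (1 + 1 / (c / 2)) * exp (-(c / 2) * ‖x‖ ^ 2) := by
        rw [mul_mul_mul_comm, mul_assoc, ← exp_add]
        ring_nf

end GaussianTail

lemma integrable_mul_of_abs_le {α : Type*} [MeasurableSpace α] {μ : Measure α} {f h u : α → ℝ}
    {C : ℝ} (hf : AEStronglyMeasurable f μ) (hh : AEStronglyMeasurable h μ)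
    (hfu : Integrable (fun x => f x * u x) μ) (hu : ∀ x, 0 ≤ u x) (hhu : ∀ x, |h x| ≤ C * u x) :
    Integrable (fun x => f x * h x) μ := by
  refine (hfu.norm.const_mul C).mono' (hf.mul hh) (ae_of_all _ fun x => ?_)
  rw [norm_mul, norm_mul, Real.norm_eq_abs (u x), abs_of_nonneg (hu x), mul_left_comm]
  exact mul_le_mul_of_nonneg_left (hhu x) (norm_nonneg _)

lemma mul_log_sub_mul_log_le {a b : ℝ} (ha : 0 ≤ a) (hb : 0 < b) :
    a * log b - a * log a ≤ b - a := by
  rcases ha.eq_or_lt with rfl | ha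
  · simpa using hb.le
  calc a * log b - a * log a = a * log (b / a) := by rw [log_div hb.ne' ha.ne']; ring
    _ ≤ a * (b / a - 1) := mul_le_mul_of_nonneg_left (log_le_sub_one_of_pos (by positivity)) ha.le
    _ = b - a := by field_simp

theorem integral_mul_log_le_integral_mul_log {α : Type*} [MeasurableSpace α] {μ : Measure α}
    {f g : α → ℝ} (hf : 0 ≤ᵐ[μ] f) (hg : ∀ᵐ x ∂μ, 0 < g x) (hfi : Integrable f μ)
    (hgi : Integrable g μ) (hfg : ∫ x, g x ∂μ ≤ ∫ x, f x ∂μ)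
    (hfg_log : Integrable (fun x => f x * log (g x)) μ)
    (hff_log : Integrable (fun x => f x * log (f x)) μ) :
    ∫ x, f x * log (g x) ∂μ ≤ ∫ x, f x * log (f x) ∂μ := by
  have key : ∫ x, (f x * log (g x) - f x * log (f x)) ∂μ ≤ ∫ x, (g x - f x) ∂μ :=
    integral_mono_ae (hfg_log.sub hff_log) (hgi.sub hfi) <| by
      filter_upwards [hf, hg] with x hfx hgx using mul_log_sub_mul_log_le hfx hgx
  rw [integral_sub hfg_log hff_log, integral_sub hgi hfi] at key
  linarith

section WithDensity

variable {α : Type*} [MeasurableSpace α] {μ : Measure α} {f : α → ℝ}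

lemma integral_withDensity_ofReal (hf : Measurable f) (hf0 : ∀ x, 0 ≤ f x) (g : α → ℝ) :
    ∫ x, g x ∂μ.withDensity (fun x => ENNReal.ofReal (f x)) = ∫ x, f x * g x ∂μ := by
  rw [integral_withDensity_eq_integral_toReal_smul hf.ennreal_ofReal
    (ae_of_all _ fun _ => ENNReal.ofReal_lt_top)]
  simp_rw [ENNReal.toReal_ofReal (hf0 _), smul_eq_mul]

lemma integrable_withDensity_ofReal_iff (hf : Measurable f) (hf0 : ∀ x, 0 ≤ f x) {g : α → ℝ} :
    Integrable g (μ.withDensity fun x => ENNReal.ofReal (f x)) ↔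
      Integrable (fun x => f x * g x) μ := by
  rw [integrable_withDensity_iff_integrable_smul' hf.ennreal_ofReal
    (ae_of_all _ fun _ => ENNReal.ofReal_lt_top)]
  simp_rw [ENNReal.toReal_ofReal (hf0 _), smul_eq_mul]

end WithDensity

section GaussianDensity

variable {p : ℕ} {m : Fin p → ℝ} {S : Matrix (Fin p) (Fin p) ℝ}

lemma gpdf_pos (hS : S.PosDef) (x : Fin p → ℝ) : 0 < gpdf m S x := by
  have := hS.det_pos
  unfold gpdf
  positivity

@[fun_prop]
lemma continuous_gpdf (m : Fin p → ℝ) (S : Matrix (Fin p) (Fin p) ℝ) : Continuous (gpdf m S) := by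
  unfold gpdf
  fun_prop

lemma exists_gpdf_le_exp (hS : S.PosDef) :
    ∃ c > 0, ∃ K, ∀ x, gpdf m S x ≤ K * exp (-c * ‖x‖ ^ 2) := by
  obtain ⟨ε, hε, hq⟩ := hS.inv.exists_pos_mul_sq_norm_le
  have := hS.det_pos
  refine ⟨ε / 4, by positivity,
    (2 * π) ^ (-(p : ℝ) / 2) * S.det ^ (-(1 : ℝ) / 2) * exp (ε / 2 * ‖m‖ ^ 2), fun x => ?_⟩
  have hx : ‖x‖ ^ 2 ≤ 2 * (‖x - m‖ ^ 2 + ‖m‖ ^ 2) := by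
    simpa using sq_norm_add_le (x - m) m
  have hexp : -(1 / 2) * ((x - m) ⬝ᵥ (S⁻¹ *ᵥ (x - m))) ≤ ε / 2 * ‖m‖ ^ 2 + -(ε / 4) * ‖x‖ ^ 2 := by
    nlinarith [hq (x - m)]
  unfold gpdf
  rw [mul_assoc _ (exp _), ← exp_add]
  gcongr

lemma exists_abs_log_mul_gpdf_le (hS : S.PosDef) (a : ℝ) :
    ∃ C, ∀ x, |log (a * gpdf m S x)| ≤ C * (1 + ‖x‖ ^ 2) := by
  rcases eq_or_ne a 0 with rfl | ha
  · exact ⟨0, by simp⟩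
  obtain ⟨B, hB, hq⟩ := Matrix.exists_abs_dotProduct_mulVec_le S⁻¹
  have := hS.det_pos
  set K := (2 * π) ^ (-(p : ℝ) / 2) * S.det ^ (-(1 : ℝ) / 2)
  have hK : 0 < K := by positivity
  refine ⟨|log (a * K)| + B * (1 + ‖m‖ ^ 2), fun x => ?_⟩
  have hlog : log (a * gpdf m S x) =
      log (a * K) - 1 / 2 * ((x - m) ⬝ᵥ (S⁻¹ *ᵥ (x - m))) := by
    rw [gpdf, ← mul_assoc, log_mul (mul_ne_zero ha hK.ne') (exp_ne_zero _), log_exp]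
    ring
  have hxm : ‖x - m‖ ^ 2 ≤ 2 * (‖x‖ ^ 2 + ‖m‖ ^ 2) := by
    simpa [sub_eq_add_neg] using sq_norm_add_le x (-m)
  have hQ := (hq (x - m)).trans (mul_le_mul_of_nonneg_left hxm hB)
  rw [hlog]
  refine (abs_sub _ _).trans ?_
  rw [abs_mul, abs_of_pos (by norm_num : (0 : ℝ) < 1 / 2)]
  nlinarith [abs_nonneg (log (a * K)), mul_nonneg hB (sq_nonneg ‖x‖),
    mul_nonneg hB (sq_nonneg ‖m‖)]

lemma integrable_gpdf_mul_one_add_sq_norm (hS : S.PosDef) :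
    Integrable (fun x => gpdf m S x * (1 + ‖x‖ ^ 2)) := by
  obtain ⟨c, hc, K, hK⟩ := exists_gpdf_le_exp (m := m) hS
  exact integrable_mul_one_add_sq_norm_of_le_exp (by fun_prop) hc
    fun x => (abs_of_pos (gpdf_pos hS x)).trans_le (hK x)

lemma integrable_gpdf (hS : S.PosDef) : Integrable (gpdf m S) := by
  obtain ⟨c, hc, K, hK⟩ := exists_gpdf_le_exp (m := m) hS
  refine ((integrable_exp_neg_mul_sq_norm hc).const_mul K).mono (by fun_prop)
    (ae_of_all _ fun x => ?_)
  rw [norm_of_nonneg (gpdf_pos hS x).le, norm_of_nonneg ((gpdf_pos hS x).le.trans (hK x))]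
  exact hK x

end GaussianDensity

/-- Equals `max_j πⱼ φ(·;θⱼ)`: only the term of the region containing the point survives. -/
noncomputable def unnormClusterDensity {p k : ℕ} (w : Fin k → ℝ) (m : Fin k → Fin p → ℝ)
    (S : Fin k → Matrix (Fin p) (Fin p) ℝ) (x : Fin p → ℝ) : ℝ :=
  ∑ j, Set.indicator (Zpart w m S j) (fun y => w j * gpdf (m j) (S j) y) x

section Partition

variable {p k : ℕ} {w : Fin k → ℝ} {m : Fin k → Fin p → ℝ}
  {S : Fin k → Matrix (Fin p) (Fin p) ℝ}

lemma measurableSet_Zpart (w : Fin k → ℝ) (m : Fin k → Fin p → ℝ)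
    (S : Fin k → Matrix (Fin p) (Fin p) ℝ) (j : Fin k) : MeasurableSet (Zpart w m S j) := by
  have hle : ∀ r s : Fin k, Measurable fun x =>
      w r * gpdf (m r) (S r) x ≤ w s * gpdf (m s) (S s) x := fun r s =>
    measurableSet_setOfPred.1 (measurableSet_le (by fun_prop) (by fun_prop))
  exact measurableSet_setOfPred.2 <| (Measurable.forall fun r => hle r j).and <|
    Measurable.forall fun r => Measurable.forall fun _ => (Measurable.forall fun s => hle s r).not

lemma exists_mem_Zpart [Nonempty (Fin k)] (x : Fin p → ℝ) : ∃ j, x ∈ Zpart w m S j := by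
  obtain ⟨j₀, hj₀⟩ := Finite.exists_max fun r => w r * gpdf (m r) (S r) x
  obtain ⟨j, hj, hmin⟩ := wellFounded_lt.has_min
    {j | ∀ r, w r * gpdf (m r) (S r) x ≤ w j * gpdf (m j) (S j) x} ⟨j₀, hj₀⟩
  exact ⟨j, hj, fun r hr hall => hmin r hall hr⟩

lemma eq_of_mem_Zpart {i j : Fin k} {x : Fin p → ℝ}
    (hi : x ∈ Zpart w m S i) (hj : x ∈ Zpart w m S j) : i = j := by
  by_contra hne
  rcases lt_or_gt_of_ne hne with h | h
  · exact hj.2 i h hi.1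
  · exact hi.2 j h hj.1

lemma unnormClusterDensity_eq_of_mem {j : Fin k} {x : Fin p → ℝ} (hx : x ∈ Zpart w m S j) :
    unnormClusterDensity w m S x = w j * gpdf (m j) (S j) x := by
  rw [unnormClusterDensity, Finset.sum_eq_single j
    (fun i _ hij => Set.indicator_of_notMem (fun hi => hij (eq_of_mem_Zpart hi hx)) _)
    (by simp), Set.indicator_of_mem hx]

lemma mul_gpdf_le_unnormClusterDensity (r : Fin k) (x : Fin p → ℝ) :
    w r * gpdf (m r) (S r) x ≤ unnormClusterDensity w m S x := by
  have : Nonempty (Fin k) := ⟨r⟩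
  obtain ⟨j, hj⟩ := exists_mem_Zpart (w := w) (m := m) (S := S) x
  exact (unnormClusterDensity_eq_of_mem hj).symm ▸ hj.1 r

-- Where no `Z_j` contains `x` (only when `k = 0`) both sides are `0`, as `log 0 = 0`.
lemma log_unnormClusterDensity_eq_sum_indicator (x : Fin p → ℝ) :
    log (unnormClusterDensity w m S x) =
      ∑ j, (Zpart w m S j).indicator (fun y => log (w j * gpdf (m j) (S j) y)) x := by
  by_cases hx : ∃ j, x ∈ Zpart w m S j
  · obtain ⟨j, hj⟩ := hx
    rw [unnormClusterDensity_eq_of_mem hj, Finset.sum_eq_single j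
      (fun i _ hij => Set.indicator_of_notMem (fun hi => hij (eq_of_mem_Zpart hi hj)) _)
      (by simp), Set.indicator_of_mem hj]
  · simp [unnormClusterDensity, not_exists.1 hx]

lemma sum_setIntegral_log_mul_gpdf {P : Measure (Fin p → ℝ)}
    (hint : Integrable (fun x => log (unnormClusterDensity w m S x)) P) :
    ∑ j, ∫ x in Zpart w m S j, log (w j * gpdf (m j) (S j) x) ∂P =
      ∫ x, log (unnormClusterDensity w m S x) ∂P := by
  have hZ : ∀ j, IntegrableOn (fun x => log (w j * gpdf (m j) (S j) x)) (Zpart w m S j) P :=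
    fun j => hint.integrableOn.congr_fun
      (fun x hx => congrArg log (unnormClusterDensity_eq_of_mem hx)) (measurableSet_Zpart w m S j)
  simp_rw [log_unnormClusterDensity_eq_sum_indicator]
  rw [integral_finsetSum _ fun j _ => (hZ j).integrable_indicator (measurableSet_Zpart w m S j)]
  simp_rw [integral_indicator (measurableSet_Zpart w m S _)]

end Partition

section UnnormalizedDensity

variable {p k : ℕ} {w : Fin k → ℝ} {m : Fin k → Fin p → ℝ}
  {S : Fin k → Matrix (Fin p) (Fin p) ℝ}

lemma unnormClusterDensity_pos (hw1 : ∑ j, w j = 1) (hS : ∀ j, (S j).PosDef)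
    (x : Fin p → ℝ) : 0 < unnormClusterDensity w m S x := by
  obtain ⟨r, -, hr⟩ := Finset.exists_lt_of_sum_lt (s := Finset.univ) (f := fun _ => (0 : ℝ))
    (g := w) (by simp [hw1])
  exact (mul_pos hr (gpdf_pos (hS r) x)).trans_le (mul_gpdf_le_unnormClusterDensity r x)

@[fun_prop]
lemma measurable_unnormClusterDensity (w : Fin k → ℝ) (m : Fin k → Fin p → ℝ)
    (S : Fin k → Matrix (Fin p) (Fin p) ℝ) : Measurable (unnormClusterDensity w m S) :=
  Finset.measurable_sum _ fun j _ =>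
    ((continuous_gpdf (m j) (S j)).measurable.const_mul _).indicator (measurableSet_Zpart w m S j)

lemma integrable_unnormClusterDensity_mul {u : (Fin p → ℝ) → ℝ}
    (hu : ∀ j, Integrable (fun x => gpdf (m j) (S j) x * u x)) :
    Integrable (fun x => unnormClusterDensity w m S x * u x) := by
  simp_rw [unnormClusterDensity, Finset.sum_mul, ← Set.indicator_mul_left, mul_assoc]
  exact integrable_finsetSum _ fun j _ =>
    ((hu j).const_mul (w j)).indicator (measurableSet_Zpart w m S j)

lemma integrable_unnormClusterDensity (hS : ∀ j, (S j).PosDef) :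
    Integrable (unnormClusterDensity w m S) := by
  simpa using integrable_unnormClusterDensity_mul (w := w) (u := fun _ => 1)
    fun j => by simpa using integrable_gpdf (m := m j) (hS j)

lemma integral_unnormClusterDensity (hS : ∀ j, (S j).PosDef) :
    ∫ x, unnormClusterDensity w m S x = etaDen w m S := by
  unfold unnormClusterDensity etaDen
  rw [integral_finsetSum _ fun j _ =>
    ((integrable_gpdf (hS j)).const_mul (w j)).indicator (measurableSet_Zpart w m S j)]
  simp_rw [integral_indicator (measurableSet_Zpart w m S _), integral_const_mul]

lemma exists_abs_log_unnormClusterDensity_le (hS : ∀ j, (S j).PosDef) :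
    ∃ C, ∀ x, |log (unnormClusterDensity w m S x)| ≤ C * (1 + ‖x‖ ^ 2) := by
  choose C hC using fun j => exists_abs_log_mul_gpdf_le (m := m j) (hS j) (w j)
  refine ⟨∑ j, C j, fun x => ?_⟩
  rw [log_unnormClusterDensity_eq_sum_indicator, Finset.sum_mul]
  refine (Finset.abs_sum_le_sum_abs _ _).trans (Finset.sum_le_sum fun j _ => ?_)
  exact (norm_indicator_le_norm_self (fun y => log (w j * gpdf (m j) (S j) y)) x).trans (hC j x)

lemma etaDen_pos (hw1 : ∑ j, w j = 1) (hS : ∀ j, (S j).PosDef) : 0 < etaDen w m S := by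
  have hpos := unnormClusterDensity_pos (m := m) hw1 hS
  rw [← integral_unnormClusterDensity hS, integral_pos_iff_support_of_nonneg
    (fun x => (hpos x).le) (integrable_unnormClusterDensity hS),
    Function.support_eq_univ fun x => (hpos x).ne']
  exact isOpen_univ.measure_pos _ Set.univ_nonempty

lemma eta_pos (hw1 : ∑ j, w j = 1) (hS : ∀ j, (S j).PosDef) : 0 < eta w m S :=
  one_div_pos.2 (etaDen_pos hw1 hS)

end UnnormalizedDensity

section ClusterDensity

variable {p k k₀ : ℕ} {w : Fin k → ℝ} {m : Fin k → Fin p → ℝ}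
  {S : Fin k → Matrix (Fin p) (Fin p) ℝ} {w₀ : Fin k₀ → ℝ} {m₀ : Fin k₀ → Fin p → ℝ}
  {S₀ : Fin k₀ → Matrix (Fin p) (Fin p) ℝ}

lemma clusterDensity_eq_eta_mul (x : Fin p → ℝ) :
    clusterDensity w m S x = eta w m S * unnormClusterDensity w m S x := rfl

lemma clusterDensity_pos (hw1 : ∑ j, w j = 1) (hS : ∀ j, (S j).PosDef) (x : Fin p → ℝ) :
    0 < clusterDensity w m S x :=
  mul_pos (eta_pos hw1 hS) (unnormClusterDensity_pos hw1 hS x)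

@[fun_prop]
lemma measurable_clusterDensity (w : Fin k → ℝ) (m : Fin k → Fin p → ℝ)
    (S : Fin k → Matrix (Fin p) (Fin p) ℝ) : Measurable (clusterDensity w m S) :=
  (measurable_unnormClusterDensity w m S).const_mul _

lemma integrable_clusterDensity (hS : ∀ j, (S j).PosDef) : Integrable (clusterDensity w m S) :=
  (integrable_unnormClusterDensity hS).const_mul _

lemma integral_clusterDensity (hw1 : ∑ j, w j = 1) (hS : ∀ j, (S j).PosDef) :
    ∫ x, clusterDensity w m S x = 1 := by
  simp_rw [clusterDensity_eq_eta_mul]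
  rw [integral_const_mul, integral_unnormClusterDensity hS, eta,
    one_div_mul_cancel (etaDen_pos hw1 hS).ne']

lemma log_clusterDensity (hw1 : ∑ j, w j = 1) (hS : ∀ j, (S j).PosDef) (x : Fin p → ℝ) :
    log (clusterDensity w m S x) = log (eta w m S) + log (unnormClusterDensity w m S x) :=
  log_mul (eta_pos hw1 hS).ne' (unnormClusterDensity_pos hw1 hS x).ne'

lemma integrable_clusterDensity_mul_log_unnormClusterDensity (hS₀ : ∀ j, (S₀ j).PosDef)
    (hS : ∀ j, (S j).PosDef) :
    Integrable fun x => clusterDensity w₀ m₀ S₀ x * log (unnormClusterDensity w m S x) := by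
  obtain ⟨C, hC⟩ := exists_abs_log_unnormClusterDensity_le (w := w) (m := m) hS
  have hfu := integrable_unnormClusterDensity_mul (w := w₀)
    fun j => integrable_gpdf_mul_one_add_sq_norm (m := m₀ j) (hS₀ j)
  simpa only [clusterDensity_eq_eta_mul, mul_assoc] using
    (integrable_mul_of_abs_le (by fun_prop)
      (measurable_unnormClusterDensity w m S).log.aestronglyMeasurable hfu
      (fun x => by positivity) hC).const_mul (eta w₀ m₀ S₀)

lemma integrable_mul_log_clusterDensity {f : (Fin p → ℝ) → ℝ} (hf : Integrable f)
    (hfg : Integrable fun x => f x * log (unnormClusterDensity w m S x))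
    (hw1 : ∑ j, w j = 1) (hS : ∀ j, (S j).PosDef) :
    Integrable fun x => f x * log (clusterDensity w m S x) := by
  simp_rw [log_clusterDensity hw1 hS, mul_add]
  exact (hf.mul_const _).add hfg

lemma integral_mul_log_clusterDensity {f : (Fin p → ℝ) → ℝ} (hf : Integrable f)
    (hf1 : ∫ x, f x = 1) (hfg : Integrable fun x => f x * log (unnormClusterDensity w m S x))
    (hw1 : ∑ j, w j = 1) (hS : ∀ j, (S j).PosDef) :
    ∫ x, f x * log (clusterDensity w m S x) =
      log (eta w m S) + ∫ x, f x * log (unnormClusterDensity w m S x) := by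
  simp_rw [log_clusterDensity hw1 hS, mul_add]
  rw [integral_add (hf.mul_const _) hfg, integral_mul_const, hf1, one_mul]

end ClusterDensity

theorem prop1_overlap_penalized_general {p k₀ k : ℕ}
    (w₀ : Fin k₀ → ℝ) (m₀ : Fin k₀ → Fin p → ℝ) (S₀ : Fin k₀ → Matrix (Fin p) (Fin p) ℝ)
    (hw₀1 : (∑ j, w₀ j) = 1) (hS₀ : ∀ j, (S₀ j).PosDef)
    (P₀ : Measure (Fin p → ℝ))
    (hP₀ : P₀ = volume.withDensity (fun x => ENNReal.ofReal (clusterDensity w₀ m₀ S₀ x)))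
    (w : Fin k → ℝ) (m : Fin k → Fin p → ℝ) (S : Fin k → Matrix (Fin p) (Fin p) ℝ)
    (hw1 : (∑ j, w j) = 1) (hS : ∀ j, (S j).PosDef) :
    (∑ j, ∫ x in Zpart w₀ m₀ S₀ j, Real.log (w₀ j * gpdf (m₀ j) (S₀ j) x) ∂P₀) -
      (∑ j, ∫ x in Zpart w m S j, Real.log (w j * gpdf (m j) (S j) x) ∂P₀) ≥
      Real.log (eta w m S / eta w₀ m₀ S₀) := by
  have hf₀ : ∀ x, 0 ≤ clusterDensity w₀ m₀ S₀ x := fun x => (clusterDensity_pos hw₀1 hS₀ x).le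
  have hint₀ := integrable_clusterDensity_mul_log_unnormClusterDensity (m₀ := m₀) (m := m₀)
    (w₀ := w₀) (w := w₀) hS₀ hS₀
  have hint := integrable_clusterDensity_mul_log_unnormClusterDensity (m₀ := m₀) (m := m)
    (w₀ := w₀) (w := w) hS₀ hS
  subst hP₀
  rw [sum_setIntegral_log_mul_gpdf
      ((integrable_withDensity_ofReal_iff (by fun_prop) hf₀).2 hint₀),
    sum_setIntegral_log_mul_gpdf ((integrable_withDensity_ofReal_iff (by fun_prop) hf₀).2 hint),
    integral_withDensity_ofReal (by fun_prop) hf₀, integral_withDensity_ofReal (by fun_prop) hf₀,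
    log_div (eta_pos hw1 hS).ne' (eta_pos hw₀1 hS₀).ne']
  have hcd := integrable_clusterDensity (w := w₀) (m := m₀) hS₀
  have hcd1 := integral_clusterDensity (m := m₀) hw₀1 hS₀
  have gibbs := integral_mul_log_le_integral_mul_log (ae_of_all _ hf₀)
    (ae_of_all _ (clusterDensity_pos (m := m) hw1 hS)) hcd (integrable_clusterDensity hS)
    (by rw [integral_clusterDensity hw1 hS, hcd1])
    (integrable_mul_log_clusterDensity hcd hint hw1 hS)
    (integrable_mul_log_clusterDensity hcd hint₀ hw₀1 hS₀)
  rw [integral_mul_log_clusterDensity hcd hcd1 hint hw1 hS,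
    integral_mul_log_clusterDensity hcd hcd1 hint₀ hw₀1 hS₀] at gibbs
  linarith

/-- **Proposition 1** (overlap-penalized optimality of the true parameters). For `P₀` with
density `f₀(x) = η(θ⁰,π⁰) ∑ⱼ 1_{Z_j(θ⁰,π⁰)}(x) πⱼ⁰ φ(x;θⱼ⁰)` and any other configuration
`(k,θ,π)`, the difference of the classification log-likelihoods is at least
`log(η(θ,π)/η(θ⁰,π⁰))`. -/
theorem prop1_overlap_penalized {p k₀ k : ℕ}
    (w₀ : Fin k₀ → ℝ) (m₀ : Fin k₀ → Fin p → ℝ) (S₀ : Fin k₀ → Matrix (Fin p) (Fin p) ℝ)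
    (hw₀ : ∀ j, 0 < w₀ j) (hw₀1 : (∑ j, w₀ j) = 1) (hS₀ : ∀ j, (S₀ j).PosDef)
    (P₀ : Measure (Fin p → ℝ))
    (hP₀ : P₀ = volume.withDensity (fun x => ENNReal.ofReal (clusterDensity w₀ m₀ S₀ x)))
    (w : Fin k → ℝ) (m : Fin k → Fin p → ℝ) (S : Fin k → Matrix (Fin p) (Fin p) ℝ)
    (hw : ∀ j, 0 ≤ w j) (hw1 : (∑ j, w j) = 1) (hS : ∀ j, (S j).PosDef) :
    (∑ j, ∫ x in Zpart w₀ m₀ S₀ j, Real.log (w₀ j * gpdf (m₀ j) (S₀ j) x) ∂P₀) -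
      (∑ j, ∫ x in Zpart w m S j, Real.log (w j * gpdf (m j) (S j) x) ∂P₀) ≥
      Real.log (eta w m S / eta w₀ m₀ S₀) :=
  prop1_overlap_penalized_general w₀ m₀ S₀ hw₀1 hS₀ P₀ hP₀ w m S hw1 hS
end

section
/- Equivalence of TCLUST with k = 1 and the MCD: for a probability measure P on ℝᵖ, a trimming level α ∈ (0,1), and a measurable set Z with P[Z] = 1−α, the maximization over (μ, Σ) of P[1_Z(·) log φ(·; μ, Σ)] is achieved at μ = μ(Z) and Σ = Σ(Z) (the trimmed mean and trimmed covariance over Z), and the resulting maximal value equals −(1/2)[(1−α) p log(2π) + (1−α) log|Σ(Z)| + (1−α)p]. Consequently, maximizing over Z with P[Z] = 1−α is equivalent to minimizing the determinant |Σ(Z)| over such sets Z, which is the MCD population objective. -/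
/-!
Expanding `log φ` and moving the centre of the second moments from `m` to `μ(Z)`
(parallel-axis formula) gives
`∫_Z log φ(·; m, S) dP = -(1-α)/2 · (p log 2π + log|S| + tr(S⁻¹Σ(Z)) + (μ(Z)-m)ᵀS⁻¹(μ(Z)-m))`.
The last term vanishes at `m = μ(Z)`, and `log|S| + tr(S⁻¹Σ) ≥ log|Σ| + p` is `log x ≤ x - 1`
summed over the eigenvalues of `B S⁻¹ Bᵀ`, where `Σ = BᵀB`. The optimal value is then a
decreasing function of `|Σ(Z)|`, which is the MCD criterion.
-/

open MeasureTheory Matrix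

/-- The trimmed mean `μ(Z) = (1/(1−α)) ∫_Z x dP(x)`. -/
noncomputable def trimMean {p : ℕ} (P : Measure (Fin p → ℝ)) (α : ℝ)
    (Z : Set (Fin p → ℝ)) : Fin p → ℝ :=
  (1 / (1 - α)) • ∫ x in Z, x ∂P

/-- The trimmed covariance `Σ(Z) = (1/(1−α)) ∫_Z (x−μ(Z))(x−μ(Z))ᵀ dP(x)`. -/
noncomputable def trimCov {p : ℕ} (P : Measure (Fin p → ℝ)) (α : ℝ)
    (Z : Set (Fin p → ℝ)) : Matrix (Fin p) (Fin p) ℝ :=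
  Matrix.of fun i j =>
    (1 / (1 - α)) * ∫ x in Z, (x i - trimMean P α Z i) * (x j - trimMean P α Z j) ∂P

/-- The profiled trimmed Gaussian log-likelihood of the region `Z`. -/
noncomputable def mcdVal {p : ℕ} (P : Measure (Fin p → ℝ)) (α : ℝ)
    (Z : Set (Fin p → ℝ)) : ℝ :=
  ∫ x in Z, Real.log (gpdf (trimMean P α Z) (trimCov P α Z) x) ∂P

namespace Matrix

variable {n : Type*} [Fintype n] [DecidableEq n]

lemma PosDef.log_det_le_trace_sub_card {B : Matrix n n ℝ} (hB : B.PosDef) :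
    Real.log B.det ≤ B.trace - Fintype.card n := by
  have hpos := hB.eigenvalues_pos
  rw [hB.isHermitian.det_eq_prod_eigenvalues, hB.isHermitian.trace_eq_sum_eigenvalues]
  simp only [RCLike.ofReal_real_eq_id, id]
  rw [Real.log_prod fun i _ => (hpos i).ne']
  calc ∑ i, Real.log (hB.isHermitian.eigenvalues i)
      ≤ ∑ i, (hB.isHermitian.eigenvalues i - 1) :=
        Finset.sum_le_sum fun i _ => Real.log_le_sub_one_of_pos (hpos i)
    _ = _ := by simp [Finset.sum_sub_distrib]

open scoped MatrixOrder in
lemma PosDef.log_det_add_card_le {S T : Matrix n n ℝ} (hS : S.PosDef) (hT : T.PosDef) :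
    Real.log T.det + Fintype.card n ≤ Real.log S.det + (S⁻¹ * T).trace := by
  have hTdet := hT.det_pos
  obtain ⟨B, hB, rfl⟩ :=
    CStarAlgebra.isStrictlyPositive_iff_eq_star_mul_self.mp hT.isStrictlyPositive
  have hC : (B * S⁻¹ * Bᴴ).PosDef :=
    hS.inv.mul_mul_conjTranspose_same (vecMul_injective_iff_isUnit.mpr hB)
  have htr : (B * S⁻¹ * Bᴴ).trace = (S⁻¹ * (star B * B)).trace := by
    rw [Matrix.mul_assoc, trace_mul_comm, Matrix.mul_assoc, star_eq_conjTranspose]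
  have hdet : (B * S⁻¹ * Bᴴ).det = (star B * B).det / S.det := by
    rw [det_mul, det_mul, det_mul, det_nonsing_inv, Ring.inverse_eq_inv', star_eq_conjTranspose]
    ring
  have hlog := hC.log_det_le_trace_sub_card
  rw [hdet, htr, Real.log_div hTdet.ne' hS.det_pos.ne'] at hlog
  linarith

end Matrix

lemma log_gpdf {p : ℕ} (m : Fin p → ℝ) {S : Matrix (Fin p) (Fin p) ℝ} (hS : S.PosDef)
    (x : Fin p → ℝ) :
    Real.log (gpdf m S x) = -(1 / 2) * (p * Real.log (2 * Real.pi) + Real.log S.det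
      + (x - m) ⬝ᵥ (S⁻¹ *ᵥ (x - m))) := by
  have h2pi : 0 < 2 * Real.pi := by positivity
  have hc₁ := Real.rpow_pos_of_pos h2pi (-(p : ℝ) / 2)
  have hc₂ := Real.rpow_pos_of_pos hS.det_pos (-(1 : ℝ) / 2)
  rw [gpdf, Real.log_mul (mul_pos hc₁ hc₂).ne' (Real.exp_ne_zero _),
    Real.log_mul hc₁.ne' hc₂.ne', Real.log_exp, Real.log_rpow h2pi, Real.log_rpow hS.det_pos]
  ring

section Moments

variable {p : ℕ} {ν : Measure (Fin p → ℝ)}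

lemma sub_dotProduct_mulVec_sub (A : Matrix (Fin p) (Fin p) ℝ) (m x : Fin p → ℝ) :
    (x - m) ⬝ᵥ (A *ᵥ (x - m)) = ∑ i, ∑ j, A i j * ((x i - m i) * (x j - m j)) := by
  simp only [dotProduct, mulVec, Pi.sub_apply, Finset.mul_sum]
  exact Finset.sum_congr rfl fun i _ => Finset.sum_congr rfl fun j _ => by ring

lemma integrable_sub_dotProduct_mulVec_sub (A : Matrix (Fin p) (Fin p) ℝ) {m : Fin p → ℝ}
    (h : ∀ i j, Integrable (fun x => (x i - m i) * (x j - m j)) ν) :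
    Integrable (fun x => (x - m) ⬝ᵥ (A *ᵥ (x - m))) ν := by
  simp only [sub_dotProduct_mulVec_sub]
  exact integrable_finsetSum _ fun i _ => integrable_finsetSum _ fun j _ => (h i j).const_mul _

lemma integral_sub_dotProduct_mulVec_sub (A : Matrix (Fin p) (Fin p) ℝ) {m : Fin p → ℝ}
    (h : ∀ i j, Integrable (fun x => (x i - m i) * (x j - m j)) ν) :
    ∫ x, (x - m) ⬝ᵥ (A *ᵥ (x - m)) ∂ν
      = ∑ i, ∑ j, A i j * ∫ x, (x i - m i) * (x j - m j) ∂ν := by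
  have hij i j : Integrable (fun x => A i j * ((x i - m i) * (x j - m j))) ν :=
    (h i j).const_mul _
  simp only [sub_dotProduct_mulVec_sub]
  rw [integral_finsetSum _ fun i _ => integrable_finsetSum _ fun j _ => hij i j]
  simp_rw [integral_finsetSum _ fun j _ => hij _ j, integral_const_mul]

lemma sub_mul_sub_recenter (c m : Fin p → ℝ) (i j : Fin p) :
    (fun x : Fin p → ℝ => (x i - m i) * (x j - m j)) = fun x =>
      (x i - c i) * (x j - c j) + (c j - m j) * (x i - c i)
        + (c i - m i) * (x j - c j) + (c i - m i) * (c j - m j) := by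
  ext x
  ring

variable [IsFiniteMeasure ν] {c : Fin p → ℝ}

lemma integrable_sub_mul_sub (hx : Integrable (fun x => x) ν)
    (h2 : ∀ i j, Integrable (fun x => (x i - c i) * (x j - c j)) ν) (m : Fin p → ℝ)
    (i j : Fin p) :
    Integrable (fun x => (x i - m i) * (x j - m j)) ν := by
  rw [sub_mul_sub_recenter c m]
  exact ((((h2 i j).fun_add (((hx.eval i).sub (integrable_const _)).const_mul _)).fun_add
    (((hx.eval j).sub (integrable_const _)).const_mul _)).fun_add (integrable_const _))

lemma integral_coord_sub_eq_zero (hx : Integrable (fun x => x) ν)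
    (hc : ∫ x, x ∂ν = ν.real Set.univ • c) (i : Fin p) :
    ∫ x, (x i - c i) ∂ν = 0 := by
  have hi : ∫ x, x i ∂ν = ν.real Set.univ * c i := by
    rw [← eval_integral hx.eval, hc, Pi.smul_apply, smul_eq_mul]
  rw [integral_sub (hx.eval i) (integrable_const _), hi, integral_const, smul_eq_mul, sub_self]

lemma integral_sub_mul_sub (hx : Integrable (fun x => x) ν)
    (hc : ∫ x, x ∂ν = ν.real Set.univ • c)
    (h2 : ∀ i j, Integrable (fun x => (x i - c i) * (x j - c j)) ν) (m : Fin p → ℝ)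
    (i j : Fin p) :
    ∫ x, (x i - m i) * (x j - m j) ∂ν
      = ∫ x, (x i - c i) * (x j - c j) ∂ν + ν.real Set.univ * ((c i - m i) * (c j - m j)) := by
  have hcoord k : Integrable (fun x : Fin p → ℝ => x k - c k) ν :=
    (hx.eval k).sub (integrable_const _)
  have hAB := (h2 i j).fun_add ((hcoord i).const_mul (c j - m j))
  have hABC := hAB.fun_add ((hcoord j).const_mul (c i - m i))
  rw [sub_mul_sub_recenter c m, integral_add hABC (integrable_const _), integral_add hAB ((hcoord j).const_mul _),
    integral_add (h2 i j) ((hcoord i).const_mul _), integral_const_mul, integral_const_mul,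
    integral_coord_sub_eq_zero hx hc, integral_coord_sub_eq_zero hx hc, integral_const,
    smul_eq_mul]
  ring

end Moments

section Trimmed

variable {p : ℕ} {P : Measure (Fin p → ℝ)} {α : ℝ} {Z : Set (Fin p → ℝ)}

lemma trimCov_apply_comm (i j : Fin p) : trimCov P α Z j i = trimCov P α Z i j := by
  simp only [trimCov, Matrix.of_apply]
  congr 1
  exact integral_congr_ae (.of_forall fun x => mul_comm _ _)

lemma measureReal_restrict_univ_eq (hα1 : α < 1) (hZα : P Z = ENNReal.ofReal (1 - α)) :
    (P.restrict Z).real Set.univ = 1 - α := by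
  rw [measureReal_def, Measure.restrict_apply_univ, hZα, ENNReal.toReal_ofReal (by linarith)]

lemma setIntegral_eq_smul_trimMean (hα1 : α < 1) (hZα : P Z = ENNReal.ofReal (1 - α)) :
    ∫ x in Z, x ∂P = (P.restrict Z).real Set.univ • trimMean P α Z := by
  rw [measureReal_restrict_univ_eq hα1 hZα, trimMean, smul_smul,
    mul_one_div_cancel (by linarith), one_smul]

lemma setIntegral_sub_mul_sub_trimMean (hα : α ≠ 1) (i j : Fin p) :
    ∫ x in Z, (x i - trimMean P α Z i) * (x j - trimMean P α Z j) ∂P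
      = (1 - α) * trimCov P α Z i j := by
  rw [trimCov, Matrix.of_apply, ← mul_assoc, mul_one_div_cancel (sub_ne_zero.2 hα.symm), one_mul]

lemma setIntegral_sub_dotProduct_mulVec_sub (hα1 : α < 1)
    (hZα : P Z = ENNReal.ofReal (1 - α)) (hint1 : Integrable (fun x => x) (P.restrict Z))
    (hint2 : ∀ i j, Integrable
      (fun x => (x i - trimMean P α Z i) * (x j - trimMean P α Z j)) (P.restrict Z))
    (A : Matrix (Fin p) (Fin p) ℝ) (m : Fin p → ℝ) :
    ∫ x in Z, (x - m) ⬝ᵥ (A *ᵥ (x - m)) ∂P = (1 - α) * ((A * trimCov P α Z).trace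
      + (trimMean P α Z - m) ⬝ᵥ (A *ᵥ (trimMean P α Z - m))) := by
  have := isFiniteMeasure_restrict.2 (hZα ▸ ENNReal.ofReal_ne_top)
  rw [integral_sub_dotProduct_mulVec_sub A (integrable_sub_mul_sub hint1 hint2 m)]
  simp_rw [integral_sub_mul_sub hint1 (setIntegral_eq_smul_trimMean hα1 hZα) hint2 m,
    setIntegral_sub_mul_sub_trimMean hα1.ne, measureReal_restrict_univ_eq hα1 hZα]
  simp only [trace, diag, mul_apply, dotProduct, mulVec, Pi.sub_apply, Finset.mul_sum,
    ← Finset.sum_add_distrib, trimCov_apply_comm]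
  exact Finset.sum_congr rfl fun i _ => Finset.sum_congr rfl fun j _ => by ring

lemma setIntegral_log_gpdf (hα1 : α < 1)
    (hZα : P Z = ENNReal.ofReal (1 - α)) (hint1 : Integrable (fun x => x) (P.restrict Z))
    (hint2 : ∀ i j, Integrable
      (fun x => (x i - trimMean P α Z i) * (x j - trimMean P α Z j)) (P.restrict Z))
    (m : Fin p → ℝ) {S : Matrix (Fin p) (Fin p) ℝ} (hS : S.PosDef) :
    ∫ x in Z, Real.log (gpdf m S x) ∂P
      = -(1 / 2) * ((1 - α) * p * Real.log (2 * Real.pi) + (1 - α) * Real.log S.det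
          + (1 - α) * ((S⁻¹ * trimCov P α Z).trace
              + (trimMean P α Z - m) ⬝ᵥ (S⁻¹ *ᵥ (trimMean P α Z - m)))) := by
  have := isFiniteMeasure_restrict.2 (hZα ▸ ENNReal.ofReal_ne_top)
  have hquad := integrable_sub_dotProduct_mulVec_sub S⁻¹ (integrable_sub_mul_sub hint1 hint2 m)
  simp_rw [log_gpdf m hS]
  rw [integral_const_mul, integral_add (integrable_const _) hquad, integral_const,
    measureReal_restrict_univ_eq hα1 hZα,
    setIntegral_sub_dotProduct_mulVec_sub hα1 hZα hint1 hint2, smul_eq_mul]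
  ring

lemma mcdVal_eq (hα1 : α < 1)
    (hZα : P Z = ENNReal.ofReal (1 - α)) (hint1 : Integrable (fun x => x) (P.restrict Z))
    (hint2 : ∀ i j, Integrable
      (fun x => (x i - trimMean P α Z i) * (x j - trimMean P α Z j)) (P.restrict Z))
    (hpd : (trimCov P α Z).PosDef) :
    mcdVal P α Z = -(1 / 2) * ((1 - α) * p * Real.log (2 * Real.pi) +
      (1 - α) * Real.log (trimCov P α Z).det + (1 - α) * p) := by
  rw [mcdVal, setIntegral_log_gpdf hα1 hZα hint1 hint2 _ hpd,
    nonsing_inv_mul _ hpd.det_pos.ne'.isUnit, trace_one, sub_self, mulVec_zero, dotProduct_zero,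
    add_zero, Fintype.card_fin]

lemma setIntegral_log_gpdf_le_mcdVal (hα1 : α < 1)
    (hZα : P Z = ENNReal.ofReal (1 - α)) (hint1 : Integrable (fun x => x) (P.restrict Z))
    (hint2 : ∀ i j, Integrable
      (fun x => (x i - trimMean P α Z i) * (x j - trimMean P α Z j)) (P.restrict Z))
    (hpd : (trimCov P α Z).PosDef) (m : Fin p → ℝ) {S : Matrix (Fin p) (Fin p) ℝ}
    (hS : S.PosDef) :
    ∫ x in Z, Real.log (gpdf m S x) ∂P ≤ mcdVal P α Z := by
  have hdet := hS.log_det_add_card_le hpd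
  have hquad : 0 ≤ (trimMean P α Z - m) ⬝ᵥ (S⁻¹ *ᵥ (trimMean P α Z - m)) := by
    simpa using hS.inv.posSemidef.dotProduct_mulVec_nonneg (trimMean P α Z - m)
  rw [Fintype.card_fin] at hdet
  rw [setIntegral_log_gpdf hα1 hZα hint1 hint2 m hS, mcdVal_eq hα1 hZα hint1 hint2 hpd]
  nlinarith [sub_pos.2 hα1]

end Trimmed

theorem tclust_k1_eq_mcd_general {p : ℕ} (P : Measure (Fin p → ℝ))
    (α : ℝ) (hα1 : α < 1)
    (Z Z' : Set (Fin p → ℝ))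
    (hZα : P Z = ENNReal.ofReal (1 - α)) (hZ'α : P Z' = ENNReal.ofReal (1 - α))
    (hint1 : Integrable (fun x => x) (P.restrict Z))
    (hint1' : Integrable (fun x => x) (P.restrict Z'))
    (hint2 : ∀ i j, Integrable
      (fun x => (x i - trimMean P α Z i) * (x j - trimMean P α Z j)) (P.restrict Z))
    (hint2' : ∀ i j, Integrable
      (fun x => (x i - trimMean P α Z' i) * (x j - trimMean P α Z' j)) (P.restrict Z'))
    (hpd : (trimCov P α Z).PosDef) (hpd' : (trimCov P α Z').PosDef) :
    (∀ (m : Fin p → ℝ) (S : Matrix (Fin p) (Fin p) ℝ), S.PosDef →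
        ∫ x in Z, Real.log (gpdf m S x) ∂P ≤ mcdVal P α Z) ∧
      mcdVal P α Z = -(1 / 2) * ((1 - α) * p * Real.log (2 * Real.pi) +
        (1 - α) * Real.log (trimCov P α Z).det + (1 - α) * p) ∧
      ((trimCov P α Z').det ≤ (trimCov P α Z).det ↔ mcdVal P α Z ≤ mcdVal P α Z') := by
  have hval := mcdVal_eq hα1 hZα hint1 hint2 hpd
  refine ⟨fun m S hS => setIntegral_log_gpdf_le_mcdVal hα1 hZα hint1 hint2 hpd m hS, hval, ?_⟩
  rw [hval, mcdVal_eq hα1 hZ'α hint1' hint2' hpd',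
    ← Real.log_le_log_iff hpd'.det_pos hpd.det_pos]
  have hα0 : 0 < 1 - α := sub_pos.2 hα1
  constructor <;> intro h <;> nlinarith

/-- **Equivalence of TCLUST with `k = 1` and the MCD.** For a trimming region `Z` of
`P`-mass `1−α`, the maximization over `(μ,Σ)` of `∫_Z log φ(·;μ,Σ) dP` is achieved at the
trimmed mean and covariance `(μ(Z),Σ(Z))`, the maximal value equals
`−(1/2)[(1−α)p log(2π) + (1−α) log|Σ(Z)| + (1−α)p]`, and consequently comparing two such
regions `Z`, `Z'` by this maximal value is equivalent to comparing the determinants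
`|Σ(Z)|`, `|Σ(Z')|` in the opposite order (the MCD objective). -/
theorem tclust_k1_eq_mcd {p : ℕ} (P : Measure (Fin p → ℝ)) [IsProbabilityMeasure P]
    (α : ℝ) (hα : 0 < α) (hα1 : α < 1)
    (Z Z' : Set (Fin p → ℝ)) (hZ : MeasurableSet Z) (hZ' : MeasurableSet Z')
    (hZα : P Z = ENNReal.ofReal (1 - α)) (hZ'α : P Z' = ENNReal.ofReal (1 - α))
    (hint1 : Integrable (fun x => x) (P.restrict Z))
    (hint1' : Integrable (fun x => x) (P.restrict Z'))
    (hint2 : ∀ i j, Integrable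
      (fun x => (x i - trimMean P α Z i) * (x j - trimMean P α Z j)) (P.restrict Z))
    (hint2' : ∀ i j, Integrable
      (fun x => (x i - trimMean P α Z' i) * (x j - trimMean P α Z' j)) (P.restrict Z'))
    (hpd : (trimCov P α Z).PosDef) (hpd' : (trimCov P α Z').PosDef) :
    (∀ (m : Fin p → ℝ) (S : Matrix (Fin p) (Fin p) ℝ), S.PosDef →
        ∫ x in Z, Real.log (gpdf m S x) ∂P ≤ mcdVal P α Z) ∧
      mcdVal P α Z = -(1 / 2) * ((1 - α) * p * Real.log (2 * Real.pi) +
        (1 - α) * Real.log (trimCov P α Z).det + (1 - α) * p) ∧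
      ((trimCov P α Z').det ≤ (trimCov P α Z).det ↔ mcdVal P α Z ≤ mcdVal P α Z') :=
  tclust_k1_eq_mcd_general P α hα1 Z Z' hZα hZ'α hint1 hint1' hint2 hint2' hpd hpd'
end
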